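/- Suppose $i \notin S^*$ and $j \in S^*$, and let $\Delta_i = \theta^* - \max_{|S| \le K, i \in S} R(S)$. Then $\Delta_i \le u_j - u_i$. If in addition $|S^*| < K$, then $\Delta_i \le -u_i$. -/

import Mathlib

/-!
Writing `u ℓ = v ℓ (r ℓ - θ)`, every assortment `S` satisfies
`θ - R S = (θ - ∑_{ℓ ∈ S} u ℓ) / (1 + ∑_{ℓ ∈ S} v ℓ)`. At `S = S*` this gives `θ = ∑_{S*} u`;
for a feasible `S` optimality makes the numerator nonnegative, and since the denominator is at
least `1`, `θ - R S ≤ θ - ∑_S u`. Feasible assortments containing `i` are obtained from `S*` by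
swapping `j` for `i`, or, when `|S*| < K`, by adding `i`; their `u`-sums are `θ - u j + u i`
and `θ + u i`.
-/

open Finset

section MNL

variable {ι : Type*} (v r : ι → ℝ)

noncomputable def mnlRevenue (S : Finset ι) : ℝ :=
  (∑ i ∈ S, v i * r i) / (1 + ∑ i ∈ S, v i)

variable {v} {S : Finset ι}

lemma one_le_one_add_sum (hv : ∀ i ∈ S, 0 ≤ v i) : 1 ≤ 1 + ∑ i ∈ S, v i :=
  le_add_of_nonneg_right (sum_nonneg hv)

lemma sub_mnlRevenue_eq (θ : ℝ) (hv : ∀ i ∈ S, 0 ≤ v i) :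
    θ - mnlRevenue v r S = (θ - ∑ i ∈ S, v i * (r i - θ)) / (1 + ∑ i ∈ S, v i) := by
  have hd : 1 + ∑ i ∈ S, v i ≠ 0 := (one_pos.trans_le (one_le_one_add_sum hv)).ne'
  simp only [mnlRevenue, mul_sub, sum_sub_distrib, ← sum_mul]
  field_simp
  ring

lemma sum_mul_sub_mnlRevenue_self (hv : ∀ i ∈ S, 0 ≤ v i) :
    ∑ i ∈ S, v i * (r i - mnlRevenue v r S) = mnlRevenue v r S := by
  have h := sub_mnlRevenue_eq r (mnlRevenue v r S) hv
  rw [sub_self, eq_comm, div_eq_zero_iff,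
    or_iff_left (one_pos.trans_le (one_le_one_add_sum hv)).ne'] at h
  linarith

lemma sum_mul_sub_le_mnlRevenue {θ : ℝ} (hv : ∀ i ∈ S, 0 ≤ v i)
    (hS : mnlRevenue v r S ≤ θ) :
    ∑ i ∈ S, v i * (r i - θ) ≤ mnlRevenue v r S := by
  have hd := one_le_one_add_sum hv
  have hnum :
      θ - ∑ i ∈ S, v i * (r i - θ) = (1 + ∑ i ∈ S, v i) * (θ - mnlRevenue v r S) := by
    rw [sub_mnlRevenue_eq r θ hv, mul_div_cancel₀ _ (one_pos.trans_le hd).ne']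
  have := le_mul_of_one_le_left (sub_nonneg.mpr hS) hd
  linarith

end MNL

theorem mnl_gap_le_advantage_diff_of_not_mem_general
    (N K : ℕ)
    (v r : Fin N → ℝ)
    (hv : ∀ i, v i ∈ Set.Icc (0 : ℝ) 1)
    (R : Finset (Fin N) → ℝ)
    (hR : ∀ S : Finset (Fin N), R S = (∑ i ∈ S, v i * r i) / (1 + ∑ i ∈ S, v i))
    (Sstar : Finset (Fin N)) (hScard : Sstar.card ≤ K)
    (hopt : ∀ S : Finset (Fin N), S.card ≤ K → R S ≤ R Sstar)
    (θ : ℝ) (hθ : θ = R Sstar)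
    (u : Fin N → ℝ) (hu : ∀ ℓ, u ℓ = v ℓ * (r ℓ - θ))
    (i j : Fin N) (hi : i ∉ Sstar) (hj : j ∈ Sstar)
    (hne : ((univ : Finset (Fin N)).powerset.filter
        (fun S => S.card ≤ K ∧ i ∈ S)).Nonempty)
    (Δi : ℝ)
    (hΔ : Δi = θ - ((univ : Finset (Fin N)).powerset.filter
        (fun S => S.card ≤ K ∧ i ∈ S)).sup' hne R) :
    Δi ≤ u j - u i ∧ (Sstar.card < K → Δi ≤ -u i) := by
  obtain rfl : R = mnlRevenue v r := funext hR
  have hv₀ {S : Finset (Fin N)} : ∀ ℓ ∈ S, 0 ≤ v ℓ := fun ℓ _ => (hv ℓ).1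
  have hθu : θ = ∑ ℓ ∈ Sstar, u ℓ := by
    simp only [hu, hθ, sum_mul_sub_mnlRevenue_self r hv₀]
  have gap_le {S : Finset (Fin N)} (hcard : S.card ≤ K) (hiS : i ∈ S) :
      Δi ≤ θ - ∑ ℓ ∈ S, u ℓ := by
    rw [hΔ]
    refine (sub_le_sub_left (le_sup' (b := S) _ (by simp [hcard, hiS])) θ).trans ?_
    refine sub_le_sub_left ?_ θ
    simpa only [hu] using sum_mul_sub_le_mnlRevenue r hv₀ (hθ ▸ hopt S hcard)
  constructor
  · have hiE : i ∉ Sstar.erase j := fun h => hi (mem_of_mem_erase h)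
    have hcard : (insert i (Sstar.erase j)).card ≤ K := by
      rw [card_insert_of_notMem hiE, card_erase_add_one hj]
      exact hScard
    have := gap_le hcard (mem_insert_self _ _)
    rw [sum_insert hiE, sum_erase_eq_sub hj, ← hθu] at this
    linarith
  · intro hlt
    have := gap_le (card_insert_of_notMem hi ▸ hlt) (mem_insert_self i Sstar)
    rw [sum_insert hi, ← hθu] at this
    linarith

/-- For `i ∉ Sstar` and `j ∈ Sstar`, the suboptimality gap
`Δᵢ = θ - max_{|S| ≤ K, i ∈ S} R S` satisfies `Δᵢ ≤ u j - u i`; if in addition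
`|Sstar| < K`, then `Δᵢ ≤ -u i`, where `u ℓ = v ℓ * (r ℓ - θ)`. -/
theorem mnl_gap_le_advantage_diff_of_not_mem
    (N K : ℕ) (hK : 0 < K)
    (v r : Fin N → ℝ)
    (hv : ∀ i, v i ∈ Set.Icc (0 : ℝ) 1) (hr : ∀ i, r i ∈ Set.Icc (0 : ℝ) 1)
    (R : Finset (Fin N) → ℝ)
    (hR : ∀ S : Finset (Fin N), R S = (∑ i ∈ S, v i * r i) / (1 + ∑ i ∈ S, v i))
    (Sstar : Finset (Fin N)) (hScard : Sstar.card ≤ K)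
    (hopt : ∀ S : Finset (Fin N), S.card ≤ K → R S ≤ R Sstar)
    (θ : ℝ) (hθ : θ = R Sstar)
    (u : Fin N → ℝ) (hu : ∀ ℓ, u ℓ = v ℓ * (r ℓ - θ))
    (i j : Fin N) (hi : i ∉ Sstar) (hj : j ∈ Sstar)
    (hne : ((univ : Finset (Fin N)).powerset.filter
        (fun S => S.card ≤ K ∧ i ∈ S)).Nonempty)
    (Δi : ℝ)
    (hΔ : Δi = θ - ((univ : Finset (Fin N)).powerset.filter
        (fun S => S.card ≤ K ∧ i ∈ S)).sup' hne R) :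
    Δi ≤ u j - u i ∧ (Sstar.card < K → Δi ≤ -u i) :=
  mnl_gap_le_advantage_diff_of_not_mem_general N K v r hv R hR Sstar hScard hopt θ hθ u hu i j hi hj
    hne Δi hΔ
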